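/- If h : ℕ → ℕ is a computable reduction of an equivalence relation R to itself whose range misses the equivalence class of some element b (i.e., for all x, ¬(h(x) R b)), then the orbit {h^k(b) : k ∈ ℕ} consists of pairwise R-inequivalent elements, and hence R has an infinite c.e. transversal (so R is not dark). -/

import Mathlib

/-- Computable reducibility between binary relations on ℕ: `R ≤_c S`. -/
def CRed (R S : ℕ → ℕ → Prop) : Prop :=
  ∃ f : ℕ → ℕ, Computable f ∧ ∀ x y, R x y ↔ S (f x) (f y)

/-- `R` has infinitely many equivalence classes. -/
def InfClasses (R : ℕ → ℕ → Prop) : Prop :=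
  ∀ F : Finset ℕ, ∃ z, ∀ x ∈ F, ¬ R z x

/-- `R` has an infinite computably enumerable transversal. -/
def HasCeTransversal (R : ℕ → ℕ → Prop) : Prop :=
  ∃ A : Set ℕ, A.Infinite ∧ REPred (· ∈ A) ∧ ∀ x ∈ A, ∀ y ∈ A, x ≠ y → ¬ R x y

/-- `R` is dark: infinitely many classes but no infinite c.e. transversal. -/
def Dark (R : ℕ → ℕ → Prop) : Prop := InfClasses R ∧ ¬ HasCeTransversal R

/-! Undoing the reduction `k` times turns `h^[k] b R h^[k+m+1] b` into `b R h (h^[m] b)`,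
which is impossible as `h` misses the class of `b`. So `k ↦ h^[k] b` is a computable
enumeration of pairwise inequivalent elements, and its range is the transversal. -/

theorem iterate_rel_iff_of_rel_iff {α : Type*} {R : α → α → Prop} {h : α → α}
    (hred : ∀ x y, R x y ↔ R (h x) (h y)) (k : ℕ) (x y : α) :
    R x y ↔ R (h^[k] x) (h^[k] y) := by
  induction k generalizing x y with
  | zero => rfl
  | succ k ih => rw [Function.iterate_succ_apply, Function.iterate_succ_apply, hred, ih]

theorem pairwise_not_rel_iterate {α : Type*} {R : α → α → Prop} {h : α → α}
    (hsymm : ∀ ⦃x y⦄, R x y → R y x) (hred : ∀ x y, R x y ↔ R (h x) (h y)) {b : α}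
    (hmiss : ∀ x, ¬R (h x) b) :
    Pairwise fun k l => ¬R (h^[k] b) (h^[l] b) := by
  have hlt : ∀ k l, k < l → ¬R (h^[k] b) (h^[l] b) := by
    intro k l hkl hR
    obtain ⟨m, rfl⟩ := Nat.exists_eq_add_of_lt hkl
    rw [add_assoc, Function.iterate_add_apply, ← iterate_rel_iff_of_rel_iff hred,
      Function.iterate_succ_apply'] at hR
    exact hmiss _ (hsymm hR)
  intro k l hne
  rcases hne.lt_or_gt with hkl | hlk
  · exact hlt k l hkl
  · exact fun hR => hlt l k hlk (hsymm hR)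

theorem Computable.iterate {α : Type*} [Primcodable α] {h : α → α} (hh : Computable h) (b : α) :
    Computable fun k => h^[k] b :=
  (Computable.nat_rec .id (.const b) (hh.comp (Computable.snd.comp .snd)).to₂).of_eq fun k => by
    induction k with
    | zero => rfl
    | succ k ih => exact (congrArg h ih).trans (Function.iterate_succ_apply' h k b).symm

theorem Computable.rePred_mem_range {α : Type*} [Primcodable α] [DecidableEq α] {g : ℕ → α}
    (hg : Computable g) : REPred (· ∈ Set.range g) := by
  have hsearch : Partrec fun x => Nat.rfind fun k => Part.some (decide (g k = x)) :=
    Partrec.rfind (Primrec.eq.decide.to_comp.comp (hg.comp .snd) .fst).to₂.partrec₂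
  refine hsearch.dom_re.of_eq fun x => ?_
  refine (Nat.rfind_dom (p := fun k => Part.some (decide (g k = x)))).trans ?_
  simp [Set.mem_range]

theorem hasCeTransversal_of_pairwise {R : ℕ → ℕ → Prop} (hrefl : ∀ x, R x x) {g : ℕ → ℕ}
    (hg : Computable g) (hpair : Pairwise fun k l => ¬R (g k) (g l)) : HasCeTransversal R := by
  have hinj : g.Injective := fun k l hkl => by
    by_contra hne
    exact hpair hne (hkl ▸ hrefl _)
  refine ⟨Set.range g, Set.infinite_range_of_injective hinj, hg.rePred_mem_range, ?_⟩
  rintro _ ⟨k, rfl⟩ _ ⟨l, rfl⟩ hne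
  exact hpair fun hkl => hne (congrArg g hkl)

theorem orbit_transversal (R : ℕ → ℕ → Prop) (hR : Equivalence R)
    (h : ℕ → ℕ) (hcomp : Computable h) (hred : ∀ x y, R x y ↔ R (h x) (h y))
    (b : ℕ) (hmiss : ∀ x, ¬ R (h x) b) :
    (∀ k l : ℕ, k ≠ l → ¬ R (h^[k] b) (h^[l] b)) ∧ HasCeTransversal R := by
  have horbit := pairwise_not_rel_iterate (fun _ _ => hR.symm) hred hmiss
  exact ⟨horbit, hasCeTransversal_of_pairwise hR.refl (hcomp.iterate b) horbit⟩
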